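/- arXiv:gr-qc/9801099 — 3 statements merged into one kernel-verified Lean document; each statement's English description precedes it below -/
import Mathlib

section
/- For every integer n ≥ 1 and every point x = (x₁,…,x_n) ∈ X_d^n, the set Λⁿ_x = {y = (y₁,…,y_n) : y_k ∈ ℝ^{d+1}, x_k·y_k = 0 for 1 ≤ k ≤ n, and y_{j+1} − y_j ∈ V₊ for 1 ≤ j ≤ n−1} is a nonempty open convex cone with apex at the origin in the tangent space T_x X_d^n = {y : x_k·y_k = 0, 1 ≤ k ≤ n}. -/
/-!
The forward cone `V₊` is an open convex cone: two future timelike vectors have positive Minkowski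
product (reverse Cauchy–Schwarz), so `V₊` is closed under addition. Hence `Λⁿ_x`, cut out of the
linear space `T_x X_dⁿ` by the open cone conditions `y_{j+1} - y_j ∈ V₊`, is a relatively open
convex cone. Since `x_k·x_k < 0`, the orthogonal complement of `x_k` contains some `u_k ∈ V₊`, and
`y_k = C ^ k • u_k` lies in `Λⁿ_x` for `C` large because `V₊` is open.
-/

noncomputable section

/-- Minkowski bilinear form on `ℝ^{d+1}`: `x·y = x⁰y⁰ - x¹y¹ - ⋯ - xᵈyᵈ`. -/
def minkR (d : ℕ) (x y : Fin (d+1) → ℝ) : ℝ := 2 * x 0 * y 0 - ∑ i, x i * y i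

/-- The open forward light cone `V₊`. -/
def Vplus (d : ℕ) : Set (Fin (d+1) → ℝ) := {y | 0 < y 0 ∧ 0 < minkR d y y}

/-- The tangent space to `X_d^n` at `x`, identified with
`{y : x_k·y_k = 0 for all k}`. -/
def tangentSp (d n : ℕ) (x : Fin n → Fin (d+1) → ℝ) : Set (Fin n → Fin (d+1) → ℝ) :=
  {y | ∀ k, minkR d (x k) (y k) = 0}

/-- The fiber `Λⁿ_x` of the profile of the tuboid `𝒯_n` at `x ∈ X_d^n`. -/
def profileFiber (d n : ℕ) (x : Fin n → Fin (d+1) → ℝ) : Set (Fin n → Fin (d+1) → ℝ) :=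
  {y | (∀ k, minkR d (x k) (y k) = 0) ∧
    ∀ (j : ℕ) (h : j + 1 < n),
      (fun i => (y ⟨j+1, h⟩ - y ⟨j, Nat.lt_of_succ_lt h⟩) i) ∈ Vplus d}

section Minkowski

variable {d : ℕ}

theorem minkR_comm (x y : Fin (d+1) → ℝ) : minkR d x y = minkR d y x := by
  simp only [minkR, mul_comm (x _) (y _)]
  ring

theorem minkR_add_right (x y z : Fin (d+1) → ℝ) :
    minkR d x (y + z) = minkR d x y + minkR d x z := by
  simp only [minkR, Pi.add_apply, mul_add, Finset.sum_add_distrib]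
  ring

theorem minkR_smul_right (x y : Fin (d+1) → ℝ) (t : ℝ) :
    minkR d x (t • y) = t * minkR d x y := by
  simp only [minkR, Pi.smul_apply, smul_eq_mul, mul_left_comm _ t, ← Finset.mul_sum]
  ring

theorem minkR_add_left (x y z : Fin (d+1) → ℝ) :
    minkR d (x + y) z = minkR d x z + minkR d y z := by
  rw [minkR_comm, minkR_add_right, minkR_comm z, minkR_comm z]

theorem minkR_smul_left (x y : Fin (d+1) → ℝ) (t : ℝ) :
    minkR d (t • x) y = t * minkR d x y := by
  rw [minkR_comm, minkR_smul_right, minkR_comm]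

theorem minkR_eq_sub_sum_succ (x y : Fin (d+1) → ℝ) :
    minkR d x y = x 0 * y 0 - ∑ i : Fin d, x i.succ * y i.succ := by
  rw [minkR, Fin.sum_univ_succ]
  ring

theorem minkR_single_zero_right (x : Fin (d+1) → ℝ) : minkR d x (Pi.single 0 1) = x 0 := by
  simp [minkR_eq_sub_sum_succ, Fin.succ_ne_zero]

theorem minkR_pos_of_mem_Vplus {y z : Fin (d+1) → ℝ} (hy : y ∈ Vplus d) (hz : z ∈ Vplus d) :
    0 < minkR d y z := by
  obtain ⟨hy0, hyy⟩ := hy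
  obtain ⟨hz0, hzz⟩ := hz
  rw [minkR_eq_sub_sum_succ] at hyy hzz ⊢
  have hcs := Finset.sum_mul_sq_le_sq_mul_sq Finset.univ (fun i : Fin d => y i.succ)
    (fun i => z i.succ)
  have hyS : 0 ≤ ∑ i : Fin d, y i.succ ^ 2 := by positivity
  have hzS : 0 ≤ ∑ i : Fin d, z i.succ ^ 2 := by positivity
  simp only [← sq] at hyy hzz
  nlinarith [mul_lt_mul'' (sub_pos.1 hyy) (sub_pos.1 hzz) hyS hzS, mul_pos hy0 hz0]

theorem Vplus_add_mem {y z : Fin (d+1) → ℝ} (hy : y ∈ Vplus d) (hz : z ∈ Vplus d) :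
    y + z ∈ Vplus d := by
  refine ⟨by simpa using add_pos hy.1 hz.1, ?_⟩
  rw [minkR_add_left, minkR_add_right, minkR_add_right, minkR_comm z y]
  linarith [hy.2, hz.2, minkR_pos_of_mem_Vplus hy hz]

theorem Vplus_smul_mem {y : Fin (d+1) → ℝ} (hy : y ∈ Vplus d) {t : ℝ} (ht : 0 < t) :
    t • y ∈ Vplus d := by
  refine ⟨by simpa using mul_pos ht hy.1, ?_⟩
  rw [minkR_smul_left, minkR_smul_right]
  exact mul_pos ht (mul_pos ht hy.2)

theorem isOpen_Vplus : IsOpen (Vplus d) := by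
  have h0 : Continuous fun y : Fin (d+1) → ℝ => y 0 := continuous_apply 0
  have hq : Continuous fun y : Fin (d+1) → ℝ => minkR d y y := by
    unfold minkR
    fun_prop
  exact (isOpen_lt continuous_const h0).inter (isOpen_lt continuous_const hq)

/-- Openness of `V₊`: `C • a - b = C • (a - C⁻¹ • b)` and `a - C⁻¹ • b → a`. -/
theorem eventually_smul_sub_mem_Vplus {a : Fin (d+1) → ℝ} (ha : a ∈ Vplus d)
    (b : Fin (d+1) → ℝ) : ∀ᶠ C : ℝ in Filter.atTop, C • a - b ∈ Vplus d := by
  have hlim : Filter.Tendsto (fun C : ℝ => a - C⁻¹ • b) Filter.atTop (nhds a) := by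
    simpa using tendsto_const_nhds.sub ((tendsto_inv_atTop_zero (𝕜 := ℝ)).smul_const b)
  filter_upwards [hlim.eventually (isOpen_Vplus.mem_nhds ha), Filter.eventually_gt_atTop 0]
    with C hC hC0
  simpa [smul_sub, smul_smul, hC0.ne'] using Vplus_smul_mem hC hC0

/-- For `x·x < 0`, the vector `e₀ - (x⁰ / x·x) x` is orthogonal to `x` and `u·u = u⁰ ≥ 1`. -/
theorem exists_minkR_eq_zero_mem_Vplus {x : Fin (d+1) → ℝ} (hx : minkR d x x < 0) :
    ∃ u, minkR d x u = 0 ∧ u ∈ Vplus d := by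
  set s := x 0 / minkR d x x
  have hs : 0 ≤ - (s * x 0) := by
    rw [div_mul_eq_mul_div, ← div_neg]
    exact div_nonneg (mul_self_nonneg _) (neg_nonneg.2 hx.le)
  have hsx : s * minkR d x x = x 0 := div_mul_cancel₀ _ hx.ne
  refine ⟨Pi.single 0 1 - s • x, ?_, ?_, ?_⟩
  · rw [sub_eq_add_neg, ← neg_smul, minkR_add_right, minkR_smul_right, minkR_single_zero_right]
    linarith
  · simp only [Pi.sub_apply, Pi.single_eq_same, Pi.smul_apply, smul_eq_mul]
    linarith
  · rw [sub_eq_add_neg, ← neg_smul, minkR_add_left, minkR_add_right, minkR_add_right,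
      minkR_smul_left, minkR_smul_right, minkR_smul_left, minkR_smul_right,
      minkR_single_zero_right, minkR_comm _ x, minkR_single_zero_right, Pi.single_eq_same]
    simp only [neg_mul, mul_neg, neg_neg, hsx]
    linarith

end Minkowski

section ProfileFiber

variable {d n : ℕ} (x : Fin n → Fin (d+1) → ℝ)

theorem mem_profileFiber_iff {y : Fin n → Fin (d+1) → ℝ} :
    y ∈ profileFiber d n x ↔ (∀ k, minkR d (x k) (y k) = 0) ∧
      ∀ (j : ℕ) (h : j + 1 < n), y ⟨j+1, h⟩ - y ⟨j, Nat.lt_of_succ_lt h⟩ ∈ Vplus d :=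
  Iff.rfl

def profileCone : ConvexCone ℝ (Fin n → Fin (d+1) → ℝ) where
  carrier := profileFiber d n x
  smul_mem' t ht y hy := by
    rw [mem_profileFiber_iff] at hy ⊢
    refine ⟨fun k => ?_, fun j h => ?_⟩
    · simp only [Pi.smul_apply, minkR_smul_right, hy.1 k, mul_zero]
    · simpa only [Pi.smul_apply, smul_sub] using Vplus_smul_mem (hy.2 j h) ht
  add_mem' y hy z hz := by
    rw [mem_profileFiber_iff] at hy hz ⊢
    refine ⟨fun k => ?_, fun j h => ?_⟩
    · simp only [Pi.add_apply, minkR_add_right, hy.1 k, hz.1 k, add_zero]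
    · simpa only [Pi.add_apply, add_sub_add_comm] using Vplus_add_mem (hy.2 j h) (hz.2 j h)

/-- Take `y_k = C ^ k • u_k` with `u_k ∈ V₊` tangent at `x_k` and `C` so large that every
`C • u_j - u_k` lies in `V₊`. -/
theorem profileFiber_nonempty (hx : ∀ k, minkR d (x k) (x k) < 0) :
    (profileFiber d n x).Nonempty := by
  choose u hux huV using fun k => exists_minkR_eq_zero_mem_Vplus (hx k)
  obtain ⟨C, hC, hC0⟩ := ((Filter.eventually_all.2 fun j => Filter.eventually_all.2 fun k =>
    eventually_smul_sub_mem_Vplus (huV j) (u k)).and (Filter.eventually_gt_atTop 0)).exists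
  refine ⟨fun k => C ^ (k : ℕ) • u k, fun k => by simp [minkR_smul_right, hux k], fun j h => ?_⟩
  change C ^ (j + 1) • u _ - C ^ j • u _ ∈ Vplus d
  rw [pow_succ, mul_smul, ← smul_sub]
  exact Vplus_smul_mem (hC _ _) (pow_pos hC0 j)

theorem exists_isOpen_profileFiber_eq_inter_tangentSp :
    ∃ U, IsOpen U ∧ profileFiber d n x = U ∩ tangentSp d n x := by
  refine ⟨{y | ∀ (j : Fin n) (h : (j : ℕ) + 1 < n), y ⟨j + 1, h⟩ - y j ∈ Vplus d}, ?_, ?_⟩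
  · simp only [Set.ofPred_forall]
    exact isOpen_iInter_of_finite fun j => isOpen_iInter_of_finite fun h =>
      isOpen_Vplus.preimage (by fun_prop)
  · ext y
    exact ⟨fun ⟨hT, hD⟩ => ⟨fun j h => hD j h, hT⟩, fun ⟨hD, hT⟩ => ⟨hT, fun j h => hD ⟨j, _⟩ h⟩⟩

end ProfileFiber

theorem stmt1_general (d : ℕ) (R : ℝ) (hR : 0 < R) (n : ℕ)
    (x : Fin n → Fin (d+1) → ℝ) (hx : ∀ k, minkR d (x k) (x k) = -(R^2)) :
    (profileFiber d n x).Nonempty ∧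
    Convex ℝ (profileFiber d n x) ∧
    (∀ t : ℝ, 0 < t → ∀ y ∈ profileFiber d n x, t • y ∈ profileFiber d n x) ∧
    ∃ U : Set (Fin n → Fin (d+1) → ℝ), IsOpen U ∧
      profileFiber d n x = U ∩ tangentSp d n x := by
  have hx_neg : ∀ k, minkR d (x k) (x k) < 0 := fun k => by
    rw [hx k]
    exact neg_neg_of_pos (pow_pos hR 2)
  exact ⟨profileFiber_nonempty x hx_neg, (profileCone x).convex,
    fun t ht y hy => (profileCone x).smul_mem ht hy,
    exists_isOpen_profileFiber_eq_inter_tangentSp x⟩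

/-- for every `x ∈ X_d^n`, `Λⁿ_x` is a nonempty open convex cone with apex at the
origin in the tangent space `T_x X_d^n` (openness being relative to the tangent space). -/
theorem stmt1 (d : ℕ) (hd : 1 ≤ d) (R : ℝ) (hR : 0 < R) (n : ℕ) (hn : 1 ≤ n)
    (x : Fin n → Fin (d+1) → ℝ) (hx : ∀ k, minkR d (x k) (x k) = -(R^2)) :
    (profileFiber d n x).Nonempty ∧
    Convex ℝ (profileFiber d n x) ∧
    (∀ t : ℝ, 0 < t → ∀ y ∈ profileFiber d n x, t • y ∈ profileFiber d n x) ∧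
    ∃ U : Set (Fin n → Fin (d+1) → ℝ), IsOpen U ∧
      profileFiber d n x = U ∩ tangentSp d n x :=
  stmt1_general d R hR n x hx
end
end

section
/- Let a ∈ (0,1) and define, for Im w > 0, Φ(w,a) = iπ − log((w − a⁻¹)/(w − a)) − log((w + a)/(w + a⁻¹)). Then w ↦ Im Φ(w,a) is the bounded harmonic function on the upper half-plane ℂ₊ = {w : Im w > 0} with boundary values 0 on the open real segments (−a⁻¹, −a) and (a, a⁻¹) and π on the remaining real points; in particular 0 < Im Φ(w,a) < π for all w ∈ ℂ₊, Im Φ(·,a) is harmonic on ℂ₊, and it extends continuously to ℝ ∖ {±a, ±a⁻¹} with the stated boundary values. -/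
/-!
On `ℂ₊` the argument of a quotient of two points of `ℂ₊` is the difference of their arguments, so
`Im Φ(w,a) = π - θ(a⁻¹) + θ(a) - θ(-a) + θ(-a⁻¹)` with `θ(x) = arg (w - x)`. For fixed `w ∈ ℂ₊`
the angle `θ(x)` increases strictly from `0` to `π` as `x` runs over `ℝ`, which gives `0 < Im Φ < π`;
as `w` tends to a real point `t ≠ x`, `θ(x)` tends to `π` or `0` according as `t < x` or `t > x`,
which gives the boundary values. Finally `Im Φ` is the imaginary part of the holomorphic function
`π i - log (w - a⁻¹) + log (w - a) - log (w + a) + log (w + a⁻¹)`, hence harmonic.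
-/

noncomputable section
open Complex

/-- The open upper half-plane `ℂ₊`. -/
def Cplus : Set ℂ := {w | 0 < w.im}

/-- `Im Φ(w,a)` where `Φ(w,a) = iπ − log((w − a⁻¹)/(w − a)) − log((w + a)/(w + a⁻¹))`
(the imaginary part of a branch of `log` being given by `arg`). -/
def ImPhi (a : ℝ) (w : ℂ) : ℝ :=
  Real.pi - Complex.arg ((w - (a : ℂ)⁻¹) / (w - (a : ℂ)))
    - Complex.arg ((w + (a : ℂ)) / (w + (a : ℂ)⁻¹))

open Filter Topology

namespace Complex

lemma arg_pos_of_im_pos {z : ℂ} (hz : 0 < z.im) : 0 < arg z :=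
  (arg_nonneg_iff.mpr hz.le).lt_of_ne fun h => hz.ne' (arg_eq_zero_iff.mp h.symm).2

lemma arg_div_of_im_pos {z₁ z₂ : ℂ} (h₁ : 0 < z₁.im) (h₂ : 0 < z₂.im) :
    arg (z₁ / z₂) = arg z₁ - arg z₂ := by
  have hne : ∀ {z : ℂ}, 0 < z.im → z ≠ 0 := fun hz h => by simp [h] at hz
  rw [← arg_coe_angle_toReal_eq_arg, arg_div_coe_angle (hne h₁) (hne h₂), ← Real.Angle.coe_sub,
    Real.Angle.toReal_coe_eq_self_iff]
  constructor <;> linarith [arg_pos_of_im_pos h₁, arg_pos_of_im_pos h₂,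
    arg_lt_pi_iff.mpr (Or.inr h₁.ne'), arg_lt_pi_iff.mpr (Or.inr h₂.ne')]

lemma im_div_sub_ofReal (w : ℂ) (u v : ℝ) :
    ((w - v) / (w - u)).im = (v - u) * w.im / normSq (w - u) := by
  simp only [div_im, sub_im, sub_re, ofReal_im, ofReal_re, sub_zero]
  ring

lemma strictMono_arg_sub_ofReal {w : ℂ} (hw : 0 < w.im) :
    StrictMono fun x : ℝ => arg (w - x) := by
  intro u v huv
  have hsub : ∀ x : ℝ, 0 < (w - x).im := fun x => by simpa using hw
  have hquot : 0 < ((w - v) / (w - u)).im := by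
    have : 0 < normSq (w - u) := normSq_pos.mpr fun h => (hsub u).ne' (by simp [h])
    rw [im_div_sub_ofReal]
    positivity
  simpa [arg_div_of_im_pos (hsub v) (hsub u)] using arg_pos_of_im_pos hquot

lemma tendsto_arg_nhdsWithin_im_nonneg {s : ℝ} (hs : s ≠ 0) :
    Tendsto arg (𝓝[{z : ℂ | 0 ≤ z.im}] ↑s) (𝓝 (if s < 0 then Real.pi else 0)) := by
  rcases hs.lt_or_gt with hs | hs
  · rw [if_pos hs, ← arg_ofReal_of_neg hs]
    exact continuousWithinAt_arg_of_re_neg_of_im_zero (by simpa using hs) (by simp)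
  · rw [if_neg hs.not_gt, ← arg_ofReal_of_nonneg hs.le]
    exact (continuousAt_arg (ofReal_mem_slitPlane.mpr hs)).continuousWithinAt

end Complex

lemma HasDerivAt.im_comp_line {g : ℂ → ℂ} {g' c d : ℂ} {t : ℝ}
    (h : HasDerivAt g g' (c + t * d)) :
    HasDerivAt (fun s : ℝ => (g (c + s * d)).im) (g' * d).im t := by
  have hline : HasDerivAt (fun z : ℂ => c + z * d) d t := by
    simpa using ((hasDerivAt_id (t : ℂ)).mul_const d).const_add c
  exact imCLM.hasFDerivAt.comp_hasDerivAt t ((h.comp (t : ℂ) hline).comp_ofReal)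

lemma iteratedDeriv_two_im_comp_line {f : ℂ → ℂ} {U : Set ℂ} (hU : IsOpen U)
    (hf : DifferentiableOn ℂ f U) (c d : ℂ) {t : ℝ} (ht : c + t * d ∈ U) :
    iteratedDeriv 2 (fun s : ℝ => (f (c + s * d)).im) t =
      (deriv (deriv f) (c + t * d) * d ^ 2).im := by
  have hf' : DifferentiableOn ℂ (deriv f) U := (hf.analyticOnNhd hU).deriv.differentiableOn
  have hderiv : deriv (fun s : ℝ => (f (c + s * d)).im) =ᶠ[𝓝 t]
      fun s => ((fun z => deriv f z * d) (c + s * d)).im := by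
    filter_upwards [(hU.preimage (by fun_prop : Continuous fun s : ℝ => c + s * d)).mem_nhds ht]
      with s hs
    exact (hf.differentiableAt (hU.mem_nhds hs)).hasDerivAt.im_comp_line.deriv
  rw [iteratedDeriv_succ, iteratedDeriv_one, hderiv.deriv_eq, sq, ← mul_assoc]
  exact ((hf'.differentiableAt (hU.mem_nhds ht)).hasDerivAt.mul_const d).im_comp_line.deriv

theorem laplace_eq_zero_of_eqOn_im {f : ℂ → ℂ} {u : ℂ → ℝ} {U : Set ℂ} (hU : IsOpen U)
    (hf : DifferentiableOn ℂ f U) (hu : Set.EqOn u (fun z => (f z).im) U) {w : ℂ} (hw : w ∈ U) :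
    iteratedDeriv 2 (fun x : ℝ => u (x + w.im * I)) w.re +
      iteratedDeriv 2 (fun y : ℝ => u (w.re + y * I)) w.im = 0 := by
  have hslice : ∀ (c d : ℂ) (t : ℝ), c + t * d = w →
      iteratedDeriv 2 (fun s : ℝ => u (c + s * d)) t = (deriv (deriv f) w * d ^ 2).im := by
    intro c d t hcd
    have hev : (fun s : ℝ => u (c + s * d)) =ᶠ[𝓝 t] fun s => (f (c + s * d)).im := by
      filter_upwards [(hU.preimage (by fun_prop : Continuous fun s : ℝ => c + s * d)).mem_nhds
        (show c + t * d ∈ U from hcd ▸ hw)] with s hs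
      exact hu hs
    rw [hev.iteratedDeriv_eq, iteratedDeriv_two_im_comp_line hU hf c d (hcd ▸ hw), hcd]
  have hx := hslice (w.im * I) 1 w.re (by rw [mul_one, add_comm, re_add_im])
  have hy := hslice w.re I w.im (re_add_im w)
  simp only [mul_one, add_comm (w.im * I : ℂ)] at hx
  rw [hx, hy]
  simp

lemma isOpen_Cplus : IsOpen Cplus := isOpen_lt continuous_const continuous_im

lemma tendsto_arg_sub_ofReal_nhdsWithin_Cplus {t x : ℝ} (htx : t ≠ x) :
    Tendsto (fun w => arg (w - x)) (𝓝[Cplus] ↑t) (𝓝 (if t < x then Real.pi else 0)) := by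
  have hsub : Tendsto (fun w : ℂ => w - x) (𝓝[Cplus] ↑t) (𝓝[{z : ℂ | 0 ≤ z.im}] ↑(t - x)) := by
    refine tendsto_nhdsWithin_iff.mpr ⟨?_, ?_⟩
    · exact_mod_cast ((continuous_sub_right (x : ℂ)).tendsto (t : ℂ)).mono_left nhdsWithin_le_nhds
    · filter_upwards [self_mem_nhdsWithin] with w hw
      simpa using (le_of_lt hw : 0 ≤ w.im)
  simpa [sub_neg, Function.comp_def] using
    (tendsto_arg_nhdsWithin_im_nonneg (sub_ne_zero.mpr htx)).comp hsub

lemma ImPhi_eq_arg_sub {w : ℂ} (hw : 0 < w.im) (a : ℝ) :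
    ImPhi a w =
      Real.pi - arg (w - ↑a⁻¹) + arg (w - ↑a) - arg (w - ↑(-a)) + arg (w - ↑(-a⁻¹)) := by
  have hsub : ∀ x : ℂ, x.im = 0 → 0 < (w - x).im := fun x hx => by simpa [hx] using hw
  have hadd : ∀ x : ℂ, x.im = 0 → 0 < (w + x).im := fun x hx => by simpa [hx] using hw
  unfold ImPhi
  rw [arg_div_of_im_pos (hsub _ (by simp)) (hsub _ (by simp)),
    arg_div_of_im_pos (hadd _ (by simp)) (hadd _ (by simp))]
  push_cast
  simp only [sub_neg_eq_add]
  ring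

/-- A branch of `Φ(·,a)` on `ℂ₊`, with the logarithms of the quotients split. -/
def Phi (a : ℝ) (w : ℂ) : ℂ :=
  Real.pi * I - log (w - ↑a⁻¹) + log (w - ↑a) - log (w - ↑(-a)) + log (w - ↑(-a⁻¹))

lemma differentiableOn_Phi (a : ℝ) : DifferentiableOn ℂ (Phi a) Cplus := by
  intro w hw
  have hslit : ∀ x : ℝ, w - x ∈ slitPlane := fun x =>
    mem_slitPlane_iff.mpr (Or.inr (by simpa using (ne_of_gt hw : w.im ≠ 0)))
  have hlog : ∀ x : ℝ, DifferentiableAt ℂ (fun z => log (z - x)) w := fun x =>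
    ((differentiableAt_id.sub_const _).clog (hslit x))
  exact ((((differentiableAt_const _).sub (hlog _)).add (hlog _)).sub (hlog _)).add
    (hlog _) |>.differentiableWithinAt

lemma eqOn_ImPhi_im_Phi (a : ℝ) : Set.EqOn (ImPhi a) (fun w => (Phi a w).im) Cplus := by
  intro w hw
  simp [ImPhi_eq_arg_sub hw, Phi, log_im]

lemma ImPhi_mem_Ioo {a : ℝ} (ha : a ∈ Set.Ioo (0 : ℝ) 1) {w : ℂ} (hw : 0 < w.im) :
    ImPhi a w ∈ Set.Ioo 0 Real.pi := by
  obtain ⟨ha0, ha1⟩ := ha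
  have hinv : 1 < a⁻¹ := (one_lt_inv₀ ha0).mpr ha1
  have hmono := strictMono_arg_sub_ofReal hw
  have hchain : arg (w - ↑(-a⁻¹)) < arg (w - ↑(-a)) ∧ arg (w - ↑(-a)) < arg (w - ↑a) ∧
      arg (w - ↑a) < arg (w - ↑a⁻¹) :=
    ⟨hmono (by linarith), hmono (by linarith), hmono (by linarith)⟩
  have hpos : 0 < arg (w - ↑(-a⁻¹)) := arg_pos_of_im_pos (by simpa using hw)
  have hlt_pi : arg (w - ↑a⁻¹) < Real.pi := arg_lt_pi_iff.mpr (Or.inr (by simpa using hw.ne'))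
  rw [ImPhi_eq_arg_sub hw]
  constructor <;> linarith [hchain.1, hchain.2.1, hchain.2.2]

lemma alternating_indicator_sum {p q r s t : ℝ} (hpq : p < q) (hqr : q < r) (hrs : r < s)
    (hp : t ≠ p) (hq : t ≠ q) (hr : t ≠ r) (hs : t ≠ s) (c : ℝ) :
    c - (if t < s then c else 0) + (if t < r then c else 0) - (if t < q then c else 0)
      + (if t < p then c else 0) = if (r < t ∧ t < s) ∨ (p < t ∧ t < q) then 0 else c := by
  rcases hp.lt_or_gt with hp | hp <;> rcases hq.lt_or_gt with hq | hq <;>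
    rcases hr.lt_or_gt with hr | hr <;> rcases hs.lt_or_gt with hs | hs <;>
    first | (exfalso; linarith) | simp [*, not_lt.mpr, le_of_lt]

lemma tendsto_ImPhi_nhdsWithin_Cplus {a : ℝ} (ha : a ∈ Set.Ioo (0 : ℝ) 1) {x : ℝ}
    (h₁ : x ≠ a) (h₂ : x ≠ -a) (h₃ : x ≠ a⁻¹) (h₄ : x ≠ -a⁻¹) :
    Tendsto (ImPhi a) (𝓝[Cplus] ↑x)
      (𝓝 (if (a < x ∧ x < a⁻¹) ∨ (-a⁻¹ < x ∧ x < -a) then 0 else Real.pi)) := by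
  obtain ⟨ha0, ha1⟩ := ha
  have hinv : 1 < a⁻¹ := (one_lt_inv₀ ha0).mpr ha1
  have hlim := ((((tendsto_const_nhds (x := Real.pi)).sub
    (tendsto_arg_sub_ofReal_nhdsWithin_Cplus h₃)).add
    (tendsto_arg_sub_ofReal_nhdsWithin_Cplus h₁)).sub
    (tendsto_arg_sub_ofReal_nhdsWithin_Cplus h₂)).add
    (tendsto_arg_sub_ofReal_nhdsWithin_Cplus h₄)
  rw [alternating_indicator_sum (by linarith) (by linarith) (by linarith) h₄ h₂ h₁ h₃] at hlim
  refine hlim.congr' ?_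
  filter_upwards [self_mem_nhdsWithin] with w hw
  exact (ImPhi_eq_arg_sub hw a).symm

/-- `w ↦ Im Φ(w,a)` satisfies `0 < Im Φ(w,a) < π` on `ℂ₊`, is harmonic on
`ℂ₊` (Laplace's equation for the two real second partial derivatives), and extends
continuously to `ℝ ∖ {±a, ±a⁻¹}` with boundary value `0` on `(−a⁻¹,−a) ∪ (a,a⁻¹)` and
`π` on the remaining real points. -/
theorem stmt12 (a : ℝ) (ha : a ∈ Set.Ioo (0 : ℝ) 1) :
    (∀ w : ℂ, 0 < w.im → 0 < ImPhi a w ∧ ImPhi a w < Real.pi) ∧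
    (∀ w : ℂ, 0 < w.im →
      iteratedDeriv 2 (fun x : ℝ => ImPhi a ((x : ℂ) + (w.im : ℂ) * Complex.I)) w.re +
      iteratedDeriv 2 (fun y : ℝ => ImPhi a ((w.re : ℂ) + (y : ℂ) * Complex.I)) w.im = 0) ∧
    (∀ x : ℝ, x ≠ a → x ≠ -a → x ≠ a⁻¹ → x ≠ -a⁻¹ →
      Filter.Tendsto (ImPhi a) (nhdsWithin ((x : ℝ) : ℂ) Cplus)
        (nhds (if (a < x ∧ x < a⁻¹) ∨ (-a⁻¹ < x ∧ x < -a) then 0 else Real.pi))) :=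
  ⟨fun _ hw => ImPhi_mem_Ioo ha hw,
    fun _ hw => laplace_eq_zero_of_eqOn_im isOpen_Cplus (differentiableOn_Phi a)
      (eqOn_ImPhi_im_Phi a) hw,
    fun _ h₁ h₂ h₃ h₄ => tendsto_ImPhi_nhdsWithin_Cplus ha h₁ h₂ h₃ h₄⟩
end
end

section
/- (Glaser's theorem, positivity ⇔ holomorphic factorization.) Let M ≥ 1 and, for each n ∈ {1,…,M}, let U_n be a nonempty domain in ℂ^{N_n} (N_n ≥ 1), with U_n* its complex-conjugate domain; set N₀ = 0 so that U₀ is a single point. For each pair n, m ∈ {0,…,M}, let A_{nm} be a holomorphic function on U_n × U_m* (with A₀₀ ∈ ℂ). Then the following are equivalent: (G″.1) for every finite family {(c_{n,l}, t_{n,l}) : c_{n,l} ∈ ℂ, t_{n,l} ∈ U_n, 0 ≤ n ≤ M, 1 ≤ l ≤ L} one has ∑_{n,m=0}^{M} ∑_{l,k=1}^{L} c_{n,l} · conj(c_{m,k}) · A_{nm}(t_{n,l}, conj(t_{m,k})) ≥ 0; and (G.2) there exist a sequence {f_{ν,0}}_{ν∈ℕ} of complex numbers and, for each n ∈ {1,…,M},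 a sequence {f_{ν,n}}_{ν∈ℕ} of functions holomorphic in U_n, such that A_{nm}(p_n, q_m) = ∑_{ν∈ℕ} f_{ν,n}(p_n) · conj(f_{ν,m}(conj(q_m))) holds with uniform convergence on every compact subset of U_n × U_m*, for all n, m ∈ {0,…,M}. -/
/-!
Positivity (G″.1) says that `A` is a positive semidefinite kernel on the disjoint union `X` of the
domains `U n`, with `(n, p), (m, q) ↦ A n m (p, conj q)`. Along a dense sequence `x₀, x₁, …` of `X`
one runs a Cholesky (Gram–Schmidt) process: `R₀ = A`, and `R_{k+1}` is the Schur complement of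
`R_k` at `x_k`, i.e. `R_k` minus the rank-one kernel `f_k ⊗ conj f_k` with
`f_k = R_k(·, x_k) / √R_k(x_k, x_k)`. Every `R_k` is positive and vanishes at `x₀, …, x_{k-1}`,
and every `f_k` is a combination of sections of `A`, hence holomorphic. The diagonal `R_k(p, p)`
decreases in `k` and, once `x_j` is used, is at most the kernel distance `‖A(·, p) - A(·, x_j)‖²`,
which is small for `x_j` near `p`; so it tends to `0` pointwise, uniformly on compacta by Dini's
theorem, and Cauchy–Schwarz `|R_k(p, q)|² ≤ R_k(p, p) R_k(q, q)` gives (G.2). Conversely, a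
pointwise limit of sums of rank-one kernels `f ⊗ conj f` is positive.
-/

noncomputable section
open Complex

/-- Coordinatewise complex conjugation of a vector in `ℂ^K`. -/
def conjVec {K : ℕ} (z : Fin K → ℂ) : Fin K → ℂ := fun i => (starRingEnd ℂ) (z i)

open ComplexConjugate Filter Topology Finset
open scoped ComplexOrder

section PosKernel

variable {X : Type*}

def kernelForm (B : X → X → ℂ) {L : ℕ} (c : Fin L → ℂ) (x : Fin L → X) : ℂ :=
  ∑ i, ∑ j, c i * conj (c j) * B (x i) (x j)

def IsPosKernel (B : X → X → ℂ) : Prop :=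
  ∀ (L : ℕ) (c : Fin L → ℂ) (x : Fin L → X), 0 ≤ kernelForm B c x

variable {B : X → X → ℂ}

theorem kernelForm_two (B : X → X → ℂ) (a b : ℂ) (x y : X) :
    kernelForm B ![a, b] ![x, y] = a * conj a * B x x + a * conj b * B x y
      + b * conj a * B y x + b * conj b * B y y := by
  simp only [kernelForm, Fin.sum_univ_two, Matrix.cons_val_zero, Matrix.cons_val_one]
  ring

theorem kernelForm_snoc (B : X → X → ℂ) {L : ℕ} (c : Fin L → ℂ) (x : Fin L → X) (γ : ℂ) (z : X) :
    kernelForm B (Fin.snoc c γ) (Fin.snoc x z) = kernelForm B c x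
      + ∑ i, c i * conj γ * B (x i) z + ∑ j, γ * conj (c j) * B z (x j)
      + γ * conj γ * B z z := by
  simp only [kernelForm, Fin.sum_univ_castSucc, Fin.snoc_castSucc, Fin.snoc_last,
    sum_add_distrib]
  ring

theorem IsPosKernel.kernelForm_nonneg_of_fintype (hB : IsPosKernel B) {ι : Type*} [Fintype ι]
    (c : ι → ℂ) (x : ι → X) : 0 ≤ ∑ i, ∑ j, c i * conj (c j) * B (x i) (x j) := by
  let e := Fintype.equivFin ι
  convert hB _ (c ∘ e.symm) (x ∘ e.symm) using 1
  simp only [kernelForm, Function.comp_apply]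
  refine Fintype.sum_equiv e _ _ fun i => Fintype.sum_equiv e _ _ fun j => ?_
  simp

theorem IsPosKernel.apply_self_nonneg (hB : IsPosKernel B) (x : X) : 0 ≤ B x x := by
  simpa [kernelForm] using hB 1 ![1] ![x]

theorem IsPosKernel.re_apply_self_nonneg (hB : IsPosKernel B) (x : X) : 0 ≤ (B x x).re :=
  (nonneg_iff.1 (hB.apply_self_nonneg x)).1

theorem IsPosKernel.ofReal_re_apply_self (hB : IsPosKernel B) (x : X) : ((B x x).re : ℂ) = B x x :=
  (eq_re_of_ofReal_le (hB.apply_self_nonneg x)).symm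

theorem IsPosKernel.conj_apply (hB : IsPosKernel B) (x y : X) : conj (B x y) = B y x := by
  have h1 := hB 2 ![1, 1] ![x, y]
  have h2 := hB 2 ![I, 1] ![x, y]
  have hx := (nonneg_iff.1 (hB.apply_self_nonneg x)).2
  have hy := (nonneg_iff.1 (hB.apply_self_nonneg y)).2
  rw [kernelForm_two, nonneg_iff] at h1 h2
  apply Complex.ext <;> simp at h1 h2 ⊢ <;> linarith

theorem IsPosKernel.normSq_apply_le (hB : IsPosKernel B) (x y : X) :
    normSq (B x y) ≤ (B x x).re * (B y y).re := by
  set u := B x y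
  have hquad : ∀ t : ℝ,
      0 ≤ (B x x).re * (t * t) + (-2 * normSq u) * t + normSq u * (B y y).re := by
    intro t
    have h := hB 2 ![(t : ℂ), -u] ![x, y]
    rw [kernelForm_two, ← hB.conj_apply x y, ← hB.ofReal_re_apply_self x,
      ← hB.ofReal_re_apply_self y] at h
    have hu : u * conj u = normSq u := mul_conj u
    have : (t : ℂ) * conj (t : ℂ) * ((B x x).re : ℂ) + t * conj (-u) * u
        + -u * conj (t : ℂ) * conj u + -u * conj (-u) * ((B y y).re : ℂ)
        = ((B x x).re * (t * t) + (-2 * normSq u) * t + normSq u * (B y y).re : ℝ) := by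
      simp only [conj_ofReal, map_neg]
      push_cast
      linear_combination (-2 * (t : ℂ) + (B y y).re) * hu
    rwa [this, zero_le_real] at h
  have hdisc := discrim_le_zero hquad
  rw [discrim] at hdisc
  nlinarith [normSq_nonneg u, mul_nonneg (hB.re_apply_self_nonneg x) (hB.re_apply_self_nonneg y)]

theorem IsPosKernel.norm_apply_lt (hB : IsPosKernel B) {x y : X} {ε : ℝ}
    (hx : (B x x).re < ε) (hy : (B y y).re < ε) : ‖B x y‖ < ε := by
  have hx0 := hB.re_apply_self_nonneg x
  have hy0 := hB.re_apply_self_nonneg y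
  have : ‖B x y‖ ^ 2 < ε ^ 2 := by
    rw [← normSq_eq_norm_sq, sq]
    exact (hB.normSq_apply_le x y).trans_lt (mul_lt_mul'' hx hy hx0 hy0)
  exact lt_of_pow_lt_pow_left₀ 2 (hx0.trans hx.le) this

theorem isPosKernel_sum_mul_conj {κ : Type*} (f : κ → X → ℂ) (s : Finset κ) :
    IsPosKernel fun p q => ∑ ν ∈ s, f ν p * conj (f ν q) := by
  intro L c x
  have : kernelForm (fun p q => ∑ ν ∈ s, f ν p * conj (f ν q)) c x
      = ∑ ν ∈ s, (∑ i, c i * f ν (x i)) * conj (∑ i, c i * f ν (x i)) := by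
    simp only [kernelForm, map_sum, map_mul, sum_mul_sum]
    simp only [mul_sum]
    conv_lhs => enter [2, i]; rw [sum_comm]
    rw [sum_comm]
    exact sum_congr rfl fun ν _ => sum_congr rfl fun i _ => sum_congr rfl fun j _ => by ring
  rw [this]
  exact sum_nonneg fun ν _ => by rw [mul_conj]; exact zero_le_real.2 (normSq_nonneg _)

theorem IsPosKernel.of_tendsto {α : Type*} {l : Filter α} [l.NeBot] {F : α → X → X → ℂ}
    (hF : ∀ a, IsPosKernel (F a)) (h : ∀ p q, Tendsto (fun a => F a p q) l (𝓝 (B p q))) :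
    IsPosKernel B := fun L c x =>
  ge_of_tendsto' (tendsto_finsetSum _ fun i _ => tendsto_finsetSum _ fun j _ =>
    (h (x i) (x j)).const_mul _) fun a => hF a L c x

end PosKernel

section Cholesky

variable {X : Type*} {B : X → X → ℂ}

/-- When `B z z = 0` this divides by `√0 = 0`, so the vector is `0`. -/
def cholVec (B : X → X → ℂ) (z p : X) : ℂ := B p z / √(B z z).re

def schurCompl (B : X → X → ℂ) (z p q : X) : ℂ := B p q - cholVec B z p * conj (cholVec B z q)

theorem cholVec_eq_smul (B : X → X → ℂ) (z : X) :
    cholVec B z = ((√(B z z).re : ℂ)⁻¹) • fun p => B p z := by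
  ext p
  simp [cholVec, div_eq_inv_mul]

theorem kernelForm_schurCompl (B : X → X → ℂ) (z : X) {L : ℕ} (c : Fin L → ℂ) (x : Fin L → X) :
    kernelForm (schurCompl B z) c x = kernelForm B c x
      - (∑ i, c i * cholVec B z (x i)) * conj (∑ i, c i * cholVec B z (x i)) := by
  simp only [kernelForm, schurCompl, map_sum, map_mul, sum_mul_sum, mul_sub, sum_sub_distrib]
  congr 1
  exact sum_congr rfl fun i _ => sum_congr rfl fun j _ => by ring

theorem isPosKernel_schurCompl (hB : IsPosKernel B) (z : X) : IsPosKernel (schurCompl B z) := by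
  intro L c x
  rw [kernelForm_schurCompl]
  set d := (B z z).re
  set T := ∑ i, c i * cholVec B z (x i)
  rcases (hB.re_apply_self_nonneg z).eq_or_lt with hd | hd
  · have hT : T = 0 := by simp [T, cholVec, ← hd]
    simpa [hT] using hB L c x
  -- Adding the point `z` with weight `γ = -T / √d` to the family realizes the Schur complement.
  set γ := -T / √d
  have hs : (√d : ℂ) ≠ 0 := ofReal_ne_zero.2 (Real.sqrt_pos.2 hd).ne'
  have hsd : (√d : ℂ) * √d = d := by rw [← ofReal_mul, Real.mul_self_sqrt hd.le]
  have hcol : ∀ p, B p z = √d * cholVec B z p := fun p => by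
    rw [cholVec, mul_div_cancel₀ _ hs]
  have hS : ∑ i, c i * conj γ * B (x i) z = conj γ * √d * T := by
    rw [mul_sum]
    exact sum_congr rfl fun i _ => by rw [hcol]; ring
  have hS' : ∑ j, γ * conj (c j) * B z (x j) = γ * √d * conj T := by
    rw [map_sum, mul_sum]
    refine sum_congr rfl fun j _ => ?_
    rw [← hB.conj_apply, hcol, map_mul, map_mul, conj_ofReal]
    ring
  have h := hB (L + 1) (Fin.snoc c γ) (Fin.snoc x z)
  rw [kernelForm_snoc, hS, hS', ← hB.ofReal_re_apply_self z] at h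
  convert h using 1
  simp only [γ, map_div₀, map_neg, conj_ofReal]
  field_simp
  linear_combination T * conj T * hsd

def cholRem (B : X → X → ℂ) (x : ℕ → X) : ℕ → X → X → ℂ
  | 0 => B
  | k + 1 => schurCompl (cholRem B x k) (x k)

def cholFactor (B : X → X → ℂ) (x : ℕ → X) (k : ℕ) : X → ℂ := cholVec (cholRem B x k) (x k)

variable {x : ℕ → X}

theorem cholRem_succ_apply (k : ℕ) (p q : X) :
    cholRem B x (k + 1) p q = cholRem B x k p q - cholFactor B x k p * conj (cholFactor B x k q) :=
  rfl

theorem cholRem_eq_sub_sum (k : ℕ) (p q : X) :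
    cholRem B x k p q
      = B p q - ∑ ν ∈ range k, cholFactor B x ν p * conj (cholFactor B x ν q) := by
  induction k with
  | zero => simp [cholRem]
  | succ k ih => rw [cholRem_succ_apply, ih, sum_range_succ]; ring

theorem isPosKernel_cholRem (hB : IsPosKernel B) (k : ℕ) : IsPosKernel (cholRem B x k) := by
  induction k with
  | zero => exact hB
  | succ k ih => exact isPosKernel_schurCompl ih (x k)

end Cholesky

section Convergence

variable {X : Type*} {B : X → X → ℂ} {x : ℕ → X}

theorem IsPosKernel.apply_eq_zero_of_re_apply_self_eq_zero (hB : IsPosKernel B) {z : X}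
    (hz : (B z z).re = 0) (p : X) : B p z = 0 := by
  have h := hB.normSq_apply_le p z
  rw [hz, mul_zero] at h
  exact normSq_eq_zero.1 (h.antisymm (normSq_nonneg _))

theorem IsPosKernel.schurCompl_apply_self_right (hB : IsPosKernel B) (z p : X) :
    schurCompl B z p z = 0 := by
  rcases (hB.re_apply_self_nonneg z).eq_or_lt with hd | hd
  · simp [schurCompl, cholVec, ← hd, hB.apply_eq_zero_of_re_apply_self_eq_zero hd.symm p]
  set s : ℂ := (√(B z z).re : ℂ)
  have hs : s ≠ 0 := ofReal_ne_zero.2 (Real.sqrt_pos.2 hd).ne'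
  have hsd : s * s = B z z := by
    rw [← ofReal_mul, Real.mul_self_sqrt hd.le, hB.ofReal_re_apply_self]
  have hzz : cholVec B z z = s := by
    change B z z / s = s
    rw [← hsd, mul_div_cancel_right₀ _ hs]
  calc schurCompl B z p z = B p z / s * s - B p z / s * conj s := by
        rw [schurCompl, hzz, div_mul_cancel₀ _ hs]; rfl
    _ = 0 := by rw [conj_ofReal, sub_self]

theorem IsPosKernel.schurCompl_apply_eq_zero (hB : IsPosKernel B) (z : X) {y : X}
    (hy : ∀ p, B p y = 0) (p : X) : schurCompl B z p y = 0 := by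
  have hyz : B y z = 0 := by rw [← hB.conj_apply, hy, map_zero]
  simp [schurCompl, cholVec, hy, hyz]

theorem IsPosKernel.cholRem_apply_seq_eq_zero (hB : IsPosKernel B) {j k : ℕ} (hjk : j < k) (p : X) :
    cholRem B x k p (x j) = 0 := by
  induction k, hjk using Nat.le_induction generalizing p with
  | base => exact (isPosKernel_cholRem hB j).schurCompl_apply_self_right (x j) p
  | succ k _ ih => exact (isPosKernel_cholRem hB k).schurCompl_apply_eq_zero (x k) ih p

theorem cholRem_mem_span (k : ℕ) (y : X) :
    (fun p => cholRem B x k p y) ∈ Submodule.span ℂ (Set.range fun y p => B p y) := by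
  induction k generalizing y with
  | zero => exact Submodule.subset_span ⟨y, rfl⟩
  | succ k ih =>
    have : (fun p => cholRem B x (k + 1) p y)
        = (fun p => cholRem B x k p y) - conj (cholFactor B x k y) • cholFactor B x k := by
      ext p; simp [cholRem_succ_apply, mul_comm]
    rw [this, cholFactor, cholVec_eq_smul, smul_smul]
    exact sub_mem (ih y) (Submodule.smul_mem _ _ (ih (x k)))

theorem cholFactor_mem_span (k : ℕ) :
    cholFactor B x k ∈ Submodule.span ℂ (Set.range fun y p => B p y) := by
  rw [cholFactor, cholVec_eq_smul]
  exact Submodule.smul_mem _ _ (cholRem_mem_span k (x k))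

/-- The squared distance between `p` and `q` in the reproducing kernel Hilbert space of `B`. -/
def kernelSqDist (B : X → X → ℂ) (p q : X) : ℝ := (B p p - B p q - B q p + B q q).re

theorem kernelSqDist_schurCompl (B : X → X → ℂ) (z p q : X) :
    kernelSqDist (schurCompl B z) p q
      = kernelSqDist B p q - normSq (cholVec B z p - cholVec B z q) := by
  rw [kernelSqDist, kernelSqDist, ← ofReal_re (normSq _), ← mul_conj, ← sub_re]
  congr 1
  simp only [schurCompl, map_sub]
  ring

theorem kernelSqDist_cholRem_le (k : ℕ) (p q : X) :
    kernelSqDist (cholRem B x k) p q ≤ kernelSqDist B p q := by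
  induction k with
  | zero => rfl
  | succ k ih =>
    rw [cholRem, kernelSqDist_schurCompl]
    linarith [normSq_nonneg (cholVec (cholRem B x k) (x k) p - cholVec (cholRem B x k) (x k) q)]

theorem antitone_re_cholRem_apply_self (p : X) : Antitone fun k => (cholRem B x k p p).re := by
  refine antitone_nat_of_succ_le fun k => ?_
  rw [cholRem_succ_apply, sub_re, mul_conj, ofReal_re]
  linarith [normSq_nonneg (cholFactor B x k p)]

theorem IsPosKernel.re_cholRem_apply_self_le (hB : IsPosKernel B) {j k : ℕ} (hjk : j < k)
    (p : X) : (cholRem B x k p p).re ≤ kernelSqDist B p (x j) := by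
  have hpj := hB.cholRem_apply_seq_eq_zero (x := x) hjk p
  have hjp : cholRem B x k (x j) p = 0 := by
    rw [← (isPosKernel_cholRem hB k).conj_apply, hpj, map_zero]
  calc (cholRem B x k p p).re = kernelSqDist (cholRem B x k) p (x j) := by
        simp [kernelSqDist, hpj, hjp, hB.cholRem_apply_seq_eq_zero hjk (x j)]
    _ ≤ kernelSqDist B p (x j) := kernelSqDist_cholRem_le k p (x j)

variable [TopologicalSpace X]

theorem IsPosKernel.tendsto_re_cholRem_apply_self (hB : IsPosKernel B) (hx : DenseRange x)
    {p : X} (hp : ContinuousAt (kernelSqDist B p) p) :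
    Tendsto (fun k => (cholRem B x k p p).re) atTop (𝓝 0) := by
  refine tendsto_order.2 ⟨fun a ha => Eventually.of_forall fun k =>
    ha.trans_le ((isPosKernel_cholRem hB k).re_apply_self_nonneg p), fun ε hε => ?_⟩
  have hpp : kernelSqDist B p p = 0 := by simp [kernelSqDist]
  obtain ⟨j, hj⟩ := hx.mem_nhds (hp.eventually_lt_const (hpp ▸ hε))
  filter_upwards [eventually_gt_atTop j] with k hk
  exact (hB.re_cholRem_apply_self_le hk p).trans_lt hj

theorem continuous_of_mem_span {f : X → ℂ} (hsec : ∀ y, Continuous fun p => B p y)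
    (hf : f ∈ Submodule.span ℂ (Set.range fun y p => B p y)) : Continuous f := by
  induction hf using Submodule.span_induction with
  | mem g hg => obtain ⟨y, rfl⟩ := hg; exact hsec y
  | zero => exact continuous_const
  | add g h _ _ hg hh => exact hg.add hh
  | smul a g _ hg => exact hg.const_smul a

theorem IsPosKernel.tendstoUniformlyOn_sum_cholFactor (hB : IsPosKernel B)
    (hsec : ∀ y, Continuous fun p => B p y) (hdiag : Continuous fun p => B p p)
    (hx : DenseRange x) {C : Set X} (hC : IsCompact C) :
    TendstoUniformlyOn
      (fun k (pq : X × X) => ∑ ν ∈ range k, cholFactor B x ν pq.1 * conj (cholFactor B x ν pq.2))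
      (fun pq => B pq.1 pq.2) atTop (C ×ˢ C) := by
  have hfac (ν : ℕ) : Continuous (cholFactor B x ν) :=
    continuous_of_mem_span hsec (cholFactor_mem_span ν)
  have hdist (p : X) : Continuous (kernelSqDist B p) := by
    have hrow : Continuous fun q => B p q := by
      simp_rw [← hB.conj_apply _ p]; exact continuous_conj.comp (hsec p)
    exact continuous_re.comp
      (((continuous_const.sub hrow).sub (hsec p)).add hdiag)
  have hdini : TendstoUniformlyOn (fun k p => (cholRem B x k p p).re) 0 atTop C := by
    refine Antitone.tendstoUniformlyOn_of_forall_tendsto hC (fun k => ?_)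
      (fun p _ => antitone_re_cholRem_apply_self p) continuousOn_const
      (fun p _ => hB.tendsto_re_cholRem_apply_self hx (hdist p).continuousAt)
    simp_rw [cholRem_eq_sub_sum]
    exact (continuous_re.comp (hdiag.sub (continuous_finsetSum _ fun ν _ =>
      (hfac ν).mul (continuous_conj.comp (hfac ν))))).continuousOn
  rw [Metric.tendstoUniformlyOn_iff] at hdini ⊢
  intro ε hε
  filter_upwards [hdini ε hε] with k hk
  rintro ⟨p, q⟩ ⟨hp, hq⟩
  have hlt (r : X) (hr : r ∈ C) : (cholRem B x k r r).re < ε :=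
    (le_abs_self _).trans_lt (by simpa [Real.dist_eq] using hk r hr)
  rw [dist_eq_norm, ← cholRem_eq_sub_sum]
  exact (isPosKernel_cholRem hB k).norm_apply_lt (hlt p hp) (hlt q hq)

end Convergence

theorem conjVec_conjVec {K : ℕ} (z : Fin K → ℂ) : conjVec (conjVec z) = z := by
  ext i; simp [conjVec]

theorem continuous_conjVec {K : ℕ} : Continuous (conjVec (K := K)) :=
  continuous_pi fun i => continuous_conj.comp (continuous_apply i)

section SigmaKernel

variable {ι : Type*} {N : ι → ℕ} (U : (n : ι) → Set (Fin (N n) → ℂ))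
  (A : (n m : ι) → (Fin (N n) → ℂ) → (Fin (N m) → ℂ) → ℂ)

def sigmaKernel (a b : Σ n, U n) : ℂ := A a.1 b.1 a.2 (conjVec b.2)

open Classical in
def sigmaExtend (g : (Σ n, U n) → ℂ) (n : ι) (p : Fin (N n) → ℂ) : ℂ :=
  if hp : p ∈ U n then g ⟨n, p, hp⟩ else 0

variable {U A}

theorem IsPosKernel.sum_sigmaKernel_nonneg [Fintype ι] (hB : IsPosKernel (sigmaKernel U A))
    {L : ℕ} (c : ι → Fin L → ℂ) (t : (n : ι) → Fin L → (Fin (N n) → ℂ))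
    (ht : ∀ n l, t n l ∈ U n) :
    0 ≤ ∑ n, ∑ m, ∑ l, ∑ k, c n l * conj (c m k) * A n m (t n l) (conjVec (t m k)) := by
  have h := hB.kernelForm_nonneg_of_fintype (fun i : ι × Fin L => c i.1 i.2)
    (fun i => ⟨i.1, t i.1 i.2, ht i.1 i.2⟩)
  simp only [Fintype.sum_prod_type] at h
  simpa only [sigmaKernel, sum_comm (γ := Fin L) (α := ι)] using h

theorem isPosKernel_sigmaKernel [Fintype ι] (hU : ∀ n, (U n).Nonempty)
    (hpos : ∀ (L : ℕ) (c : ι → Fin L → ℂ) (t : (n : ι) → Fin L → (Fin (N n) → ℂ)),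
      (∀ n l, t n l ∈ U n) →
      0 ≤ ∑ n, ∑ m, ∑ l, ∑ k, c n l * conj (c m k) * A n m (t n l) (conjVec (t m k))) :
    IsPosKernel (sigmaKernel U A) := by
  classical
  intro L c a
  -- Each point `a l` is placed in its own fibre; the other fibres get weight `0`.
  let t : (n : ι) → Fin L → (Fin (N n) → ℂ) := fun n l =>
    Function.update (fun m => (hU m).some) (a l).1 (a l).2 n
  have ht : ∀ n l, t n l ∈ U n := fun n l => by
    by_cases h : n = (a l).1
    · subst h; simp [t]
    · simp [t, h, (hU n).some_mem]
  convert hpos L (fun n l => if n = (a l).1 then c l else 0) t ht using 1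
  simp only [sum_comm (γ := ι) (α := Fin L)]
  refine sum_congr rfl fun l _ => sum_congr rfl fun k _ => ?_
  simp [apply_ite conj, ite_mul, mul_ite, t, sigmaKernel]

theorem continuous_sigmaKernel_left
    (hA : ∀ n m, ContinuousOn (fun pq : (Fin (N n) → ℂ) × (Fin (N m) → ℂ) => A n m pq.1 pq.2)
      (U n ×ˢ (conjVec '' U m)))
    (b : Σ n, U n) : Continuous fun a => sigmaKernel U A a b :=
  continuous_sigma_iff.2 fun n => (hA n b.1).comp_continuous
    (continuous_subtype_val.prodMk continuous_const) fun p => ⟨p.2, b.2.1, b.2.2, rfl⟩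

theorem continuous_sigmaKernel_diag
    (hA : ∀ n m, ContinuousOn (fun pq : (Fin (N n) → ℂ) × (Fin (N m) → ℂ) => A n m pq.1 pq.2)
      (U n ×ˢ (conjVec '' U m))) :
    Continuous fun a => sigmaKernel U A a a :=
  continuous_sigma_iff.2 fun n => (hA n n).comp_continuous
    (continuous_subtype_val.prodMk (continuous_conjVec.comp continuous_subtype_val))
    fun p => ⟨p.2, p.1, p.2, rfl⟩

theorem differentiableOn_sigmaExtend
    (hA : ∀ n m, DifferentiableOn ℂ
      (fun pq : (Fin (N n) → ℂ) × (Fin (N m) → ℂ) => A n m pq.1 pq.2) (U n ×ˢ (conjVec '' U m)))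
    {g : (Σ n, U n) → ℂ}
    (hg : g ∈ Submodule.span ℂ (Set.range fun b a => sigmaKernel U A a b)) (n : ι) :
    DifferentiableOn ℂ (sigmaExtend U g n) (U n) := by
  induction hg using Submodule.span_induction with
  | mem g hg =>
    obtain ⟨b, rfl⟩ := hg
    refine ((hA n b.1).comp (differentiableOn_id.prodMk (differentiableOn_const (conjVec b.2.1)))
      fun p hp => ⟨hp, b.2.1, b.2.2, rfl⟩).congr fun p hp => ?_
    simp [sigmaExtend, hp, sigmaKernel]
  | zero => exact (differentiableOn_const 0).congr fun p hp => by simp [sigmaExtend, hp]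
  | add g h _ _ hg hh => exact (hg.add hh).congr fun p hp => by simp [sigmaExtend, hp]
  | smul a g _ hg => exact (hg.const_smul a).congr fun p hp => by simp [sigmaExtend, hp]

theorem tendstoUniformlyOn_sigmaExtend {g : ℕ → (Σ n, U n) → ℂ}
    (hg : ∀ C : Set (Σ n, U n), IsCompact C →
      TendstoUniformlyOn (fun k (ab : (Σ n, U n) × (Σ n, U n)) =>
        ∑ ν ∈ range k, g ν ab.1 * conj (g ν ab.2)) (fun ab => sigmaKernel U A ab.1 ab.2)
        atTop (C ×ˢ C))
    {n m : ι} {K : Set ((Fin (N n) → ℂ) × (Fin (N m) → ℂ))} (hK : IsCompact K)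
    (hKU : K ⊆ U n ×ˢ (conjVec '' U m)) :
    TendstoUniformlyOn (fun k (pq : (Fin (N n) → ℂ) × (Fin (N m) → ℂ)) =>
        ∑ ν ∈ range k, sigmaExtend U (g ν) n pq.1 * conj (sigmaExtend U (g ν) m (conjVec pq.2)))
      (fun pq => A n m pq.1 pq.2) atTop K := by
  have hmem {pq} (h : pq ∈ K) : pq.1 ∈ U n ∧ conjVec pq.2 ∈ U m := by
    obtain ⟨hp, u, hu, hq⟩ := hKU h
    exact ⟨hp, hq ▸ (conjVec_conjVec u).symm ▸ hu⟩
  have hK₁ : IsCompact (Subtype.val ⁻¹' (Prod.fst '' K) : Set (U n)) :=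
    IsInducing.subtypeVal.isCompact_preimage' (hK.image continuous_fst) <| by
      rintro _ ⟨pq, h, rfl⟩; exact ⟨⟨_, (hmem h).1⟩, rfl⟩
  have hK₂ : IsCompact (Subtype.val ⁻¹' (conjVec '' (Prod.snd '' K)) : Set (U m)) :=
    IsInducing.subtypeVal.isCompact_preimage'
      ((hK.image continuous_snd).image continuous_conjVec) <| by
      rintro _ ⟨_, ⟨pq, h, rfl⟩, rfl⟩; exact ⟨⟨_, (hmem h).2⟩, rfl⟩
  have hC := (hK₁.image (continuous_sigmaMk (σ := fun n => U n))).union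
    (hK₂.image (continuous_sigmaMk (σ := fun n => U n)))
  rw [Metric.tendstoUniformlyOn_iff]
  intro ε hε
  filter_upwards [Metric.tendstoUniformlyOn_iff.1 (hg _ hC) ε hε] with k hk
  rintro ⟨p, q⟩ hpq
  obtain ⟨hp, hq⟩ := hmem hpq
  simpa [sigmaExtend, hp, hq, sigmaKernel, conjVec_conjVec] using
    hk (⟨n, p, hp⟩, ⟨m, conjVec q, hq⟩)
      ⟨Or.inl ⟨⟨p, hp⟩, ⟨_, hpq, rfl⟩, rfl⟩, Or.inr ⟨⟨_, hq⟩, ⟨q, ⟨_, hpq, rfl⟩, rfl⟩, rfl⟩⟩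

end SigmaKernel

theorem stmt15_general (M : ℕ) (N : Fin (M+1) → ℕ)
    (U : (n : Fin (M+1)) → Set (Fin (N n) → ℂ))
    (hUconn : ∀ n, IsConnected (U n))
    (A : (n m : Fin (M+1)) → (Fin (N n) → ℂ) → (Fin (N m) → ℂ) → ℂ)
    (hA : ∀ n m, DifferentiableOn ℂ
      (fun pq : (Fin (N n) → ℂ) × (Fin (N m) → ℂ) => A n m pq.1 pq.2)
      ((U n) ×ˢ (conjVec '' U m))) :
    ((∀ (L : ℕ) (c : Fin (M+1) → Fin L → ℂ)
        (t : (n : Fin (M+1)) → Fin L → (Fin (N n) → ℂ)),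
        (∀ n l, t n l ∈ U n) →
        ((∑ n, ∑ m, ∑ l, ∑ k,
            c n l * (starRingEnd ℂ) (c m k) * A n m (t n l) (conjVec (t m k))).im = 0 ∧
         0 ≤ (∑ n, ∑ m, ∑ l, ∑ k,
            c n l * (starRingEnd ℂ) (c m k) * A n m (t n l) (conjVec (t m k))).re))
      ↔
      (∃ f : ℕ → (n : Fin (M+1)) → (Fin (N n) → ℂ) → ℂ,
        (∀ ν n, DifferentiableOn ℂ (f ν n) (U n)) ∧
        ∀ n m (K : Set ((Fin (N n) → ℂ) × (Fin (N m) → ℂ))),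
          IsCompact K → K ⊆ (U n) ×ˢ (conjVec '' U m) →
          TendstoUniformlyOn
            (fun k (pq : (Fin (N n) → ℂ) × (Fin (N m) → ℂ)) =>
              ∑ ν ∈ Finset.range k, f ν n pq.1 * (starRingEnd ℂ) (f ν m (conjVec pq.2)))
            (fun pq => A n m pq.1 pq.2) Filter.atTop K)) := by
  have hU (n) : (U n).Nonempty := (hUconn n).nonempty
  have hAc (n m) := (hA n m).continuousOn
  have hnonneg (z : ℂ) : z.im = 0 ∧ 0 ≤ z.re ↔ 0 ≤ z := by rw [nonneg_iff, eq_comm, and_comm]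
  constructor
  · intro hpos
    have hB := isPosKernel_sigmaKernel hU fun L c t ht => (hnonneg _).1 (hpos L c t ht)
    have : Nonempty (Σ n, U n) := ⟨⟨0, (hU 0).some, (hU 0).some_mem⟩⟩
    let x := TopologicalSpace.denseSeq (Σ n, U n)
    refine ⟨fun ν => sigmaExtend U (cholFactor (sigmaKernel U A) x ν),
      fun ν n => differentiableOn_sigmaExtend hA (cholFactor_mem_span ν) n,
      fun n m K hK hKU => tendstoUniformlyOn_sigmaExtend (fun C hC => ?_) hK hKU⟩
    exact hB.tendstoUniformlyOn_sum_cholFactor (continuous_sigmaKernel_left hAc)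
      (continuous_sigmaKernel_diag hAc) (TopologicalSpace.denseRange_denseSeq _) hC
  · rintro ⟨f, -, hf⟩ L c t ht
    have hB : IsPosKernel (sigmaKernel U A) := by
      refine IsPosKernel.of_tendsto (l := atTop)
        (F := fun k a b => ∑ ν ∈ range k, f ν a.1 a.2 * conj (f ν b.1 b.2))
        (fun k => isPosKernel_sum_mul_conj _ _) fun a b => ?_
      have hab : {(a.2.1, conjVec b.2.1)} ⊆ U a.1 ×ˢ (conjVec '' U b.1) :=
        Set.singleton_subset_iff.2 ⟨a.2.2, b.2.1, b.2.2, rfl⟩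
      simpa [conjVec_conjVec, sigmaKernel] using
        (hf a.1 b.1 _ isCompact_singleton hab).tendsto_at rfl
    exact (hnonneg _).2 (hB.sum_sigmaKernel_nonneg c t ht)

/-- Glaser's theorem 1, (G″.1) ⇔ (G.2): for a finite sequence of domains
`U_n ⊆ ℂ^{N_n}` (with `N₀ = 0`, so `U₀` is a point) and holomorphic kernels
`A_{nm}` on `U_n × U_m*`, positivity of all finite Hermitian forms built from the
`A_{nm}` is equivalent to a holomorphic factorization
`A_{nm}(p,q) = ∑_ν f_{ν,n}(p) conj(f_{ν,m}(conj q))`, uniformly on compacts. -/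
theorem stmt15 (M : ℕ) (hM : 1 ≤ M) (N : Fin (M+1) → ℕ)
    (hN0 : N 0 = 0) (hN : ∀ n : Fin (M+1), n ≠ 0 → 1 ≤ N n)
    (U : (n : Fin (M+1)) → Set (Fin (N n) → ℂ))
    (hUopen : ∀ n, IsOpen (U n)) (hUconn : ∀ n, IsConnected (U n))
    (A : (n m : Fin (M+1)) → (Fin (N n) → ℂ) → (Fin (N m) → ℂ) → ℂ)
    (hA : ∀ n m, DifferentiableOn ℂ
      (fun pq : (Fin (N n) → ℂ) × (Fin (N m) → ℂ) => A n m pq.1 pq.2)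
      ((U n) ×ˢ (conjVec '' U m))) :
    ((∀ (L : ℕ) (c : Fin (M+1) → Fin L → ℂ)
        (t : (n : Fin (M+1)) → Fin L → (Fin (N n) → ℂ)),
        (∀ n l, t n l ∈ U n) →
        ((∑ n, ∑ m, ∑ l, ∑ k,
            c n l * (starRingEnd ℂ) (c m k) * A n m (t n l) (conjVec (t m k))).im = 0 ∧
         0 ≤ (∑ n, ∑ m, ∑ l, ∑ k,
            c n l * (starRingEnd ℂ) (c m k) * A n m (t n l) (conjVec (t m k))).re))
      ↔
      (∃ f : ℕ → (n : Fin (M+1)) → (Fin (N n) → ℂ) → ℂ,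
        (∀ ν n, DifferentiableOn ℂ (f ν n) (U n)) ∧
        ∀ n m (K : Set ((Fin (N n) → ℂ) × (Fin (N m) → ℂ))),
          IsCompact K → K ⊆ (U n) ×ˢ (conjVec '' U m) →
          TendstoUniformlyOn
            (fun k (pq : (Fin (N n) → ℂ) × (Fin (N m) → ℂ)) =>
              ∑ ν ∈ Finset.range k, f ν n pq.1 * (starRingEnd ℂ) (f ν m (conjVec pq.2)))
            (fun pq => A n m pq.1 pq.2) Filter.atTop K)) :=
  stmt15_general M N U hUconn A hA
end
end
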